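/- arXiv:2302.07851 — 5 statements merged into one kernel-verified Lean document; each statement's English description precedes it below -/
import Mathlib

section
/- Suppose f : ℝ^d → ℝ is C_v-one-point convex and ρ̂-quasar convex with respect to a global minimizer w*. Then for any θ > 1, f is (ρ, μ)-strongly quasar convex with ρ = ρ̂/θ and μ = 2C_v(θ−1)/ρ̂. -/
open RealInnerProductSpace

/- Write `s = ⟪∇f w, w - w*⟫`. Quasar convexity bounds `f w - s / ρ̂` by `f w*`, and one-point convexity
makes `(θ - 1) / ρ̂ * (C_v ‖w - w*‖² - s)` nonpositive; the sum of the two is exactly the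
`(ρ̂ / θ, 2 C_v (θ - 1) / ρ̂)`-strong quasar convexity inequality at `w`. -/

variable {E : Type*} [NormedAddCommGroup E] [InnerProductSpace ℝ E]

-- `g` plays the role of the gradient `∇f` of the paper.
def OnePointConvex (g : E → E) (c : ℝ) (wstar : E) : Prop :=
  ∀ w, c * ‖w - wstar‖ ^ 2 ≤ ⟪g w, w - wstar⟫

def QuasarConvex (f : E → ℝ) (g : E → E) (ρ : ℝ) (wstar : E) : Prop :=
  ∀ w, f w + (1 / ρ) * ⟪g w, wstar - w⟫ ≤ f wstar

def StronglyQuasarConvex (f : E → ℝ) (g : E → E) (ρ μ : ℝ) (wstar : E) : Prop :=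
  ∀ w, f w + (1 / ρ) * ⟪g w, wstar - w⟫ + μ / 2 * ‖wstar - w‖ ^ 2 ≤ f wstar

theorem QuasarConvex.stronglyQuasarConvex_of_onePointConvex {f : E → ℝ} {g : E → E}
    {c ρ θ : ℝ} {wstar : E} (hq : QuasarConvex f g ρ wstar) (hopc : OnePointConvex g c wstar)
    (hρ : 0 < ρ) (hθ : 1 ≤ θ) :
    StronglyQuasarConvex f g (ρ / θ) (2 * c * (θ - 1) / ρ) wstar := by
  intro w
  have hinner : ⟪g w, wstar - w⟫ = -⟪g w, w - wstar⟫ := by rw [← inner_neg_right, neg_sub]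
  have hgap : (θ - 1) / ρ * (c * ‖w - wstar‖ ^ 2 - ⟪g w, w - wstar⟫) ≤ 0 :=
    mul_nonpos_of_nonneg_of_nonpos (div_nonneg (sub_nonneg.2 hθ) hρ.le) (sub_nonpos.2 (hopc w))
  calc f w + 1 / (ρ / θ) * ⟪g w, wstar - w⟫ + 2 * c * (θ - 1) / ρ / 2 * ‖wstar - w‖ ^ 2
      = (f w + 1 / ρ * ⟪g w, wstar - w⟫)
          + (θ - 1) / ρ * (c * ‖w - wstar‖ ^ 2 - ⟪g w, w - wstar⟫) := by
        rw [one_div_div, hinner, norm_sub_rev]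
        ring
    _ ≤ f wstar + 0 := add_le_add (hq w) hgap
    _ = f wstar := add_zero _

theorem strongly_quasar_of_one_point_convex_general {d : ℕ}
    (f : EuclideanSpace ℝ (Fin d) → ℝ)
    (gradf : EuclideanSpace ℝ (Fin d) → EuclideanSpace ℝ (Fin d))
    (Cv ρhat : ℝ) (wstar : EuclideanSpace ℝ (Fin d))
    (hρhat : 0 < ρhat)
    (hopc : ∀ w, Cv * ‖w - wstar‖ ^ 2 ≤ ⟪gradf w, w - wstar⟫)
    (hquasar : ∀ w, f w + (1 / ρhat) * ⟪gradf w, wstar - w⟫ ≤ f wstar)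
    (θ : ℝ) (hθ : 1 < θ) :
    ∀ w, f w + (1 / (ρhat / θ)) * ⟪gradf w, wstar - w⟫
        + (2 * Cv * (θ - 1) / ρhat) / 2 * ‖wstar - w‖ ^ 2 ≤ f wstar :=
  QuasarConvex.stronglyQuasarConvex_of_onePointConvex (g := gradf) hquasar hopc hρhat hθ.le

theorem strongly_quasar_of_one_point_convex {d : ℕ}
    (f : EuclideanSpace ℝ (Fin d) → ℝ)
    (gradf : EuclideanSpace ℝ (Fin d) → EuclideanSpace ℝ (Fin d))
    (Cv ρhat : ℝ) (wstar : EuclideanSpace ℝ (Fin d))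
    (hCv : 0 < Cv) (hρhat : 0 < ρhat)
    (hgrad : ∀ w, HasGradientAt f (gradf w) w)
    (hmin : ∀ w, f wstar ≤ f w)
    (hopc : ∀ w, Cv * ‖w - wstar‖ ^ 2 ≤ ⟪gradf w, w - wstar⟫)
    (hquasar : ∀ w, f w + (1 / ρhat) * ⟪gradf w, wstar - w⟫ ≤ f wstar)
    (θ : ℝ) (hθ : 1 < θ) :
    ∀ w, f w + (1 / (ρhat / θ)) * ⟪gradf w, wstar - w⟫
        + (2 * Cv * (θ - 1) / ρhat) / 2 * ‖wstar - w‖ ^ 2 ≤ f wstar :=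
  strongly_quasar_of_one_point_convex_general f gradf Cv ρhat wstar hρhat hopc hquasar θ hθ
end

section
/- Suppose f : ℝ^d → ℝ satisfies the ν-quadratic-growth condition and is ρ̂-quasar convex with respect to a global minimizer w*. Then for any 0 < θ < 1, f is (ρ, μ)-strongly quasar convex with ρ = ρ̂·θ and μ = ν(1−θ)/θ. -/
open RealInnerProductSpace

theorem strong_quasar_ineq_of_quasar_of_growth {fw fstar I S ν ρ θ : ℝ} (hθ0 : 0 < θ) (hθ1 : θ ≤ 1)
    (hquasar : fw + 1 / ρ * I ≤ fstar) (hgrowth : ν / 2 * S ≤ fw - fstar) :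
    fw + 1 / (ρ * θ) * I + ν * (1 - θ) / θ / 2 * S ≤ fstar := by
  have hsplit : fw + 1 / (ρ * θ) * I + ν * (1 - θ) / θ / 2 * S - fstar
      = 1 / θ * (fw + 1 / ρ * I - fstar) + (1 - θ) / θ * (ν / 2 * S - (fw - fstar)) := by
    field_simp
    ring
  have hquasar_term : 1 / θ * (fw + 1 / ρ * I - fstar) ≤ 0 :=
    mul_nonpos_of_nonneg_of_nonpos (by positivity) (by linarith)
  have hgrowth_term : (1 - θ) / θ * (ν / 2 * S - (fw - fstar)) ≤ 0 :=
    mul_nonpos_of_nonneg_of_nonpos (div_nonneg (by linarith) hθ0.le) (by linarith)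
  linarith

theorem strongly_quasar_of_quadratic_growth_general {d : ℕ}
    (f : EuclideanSpace ℝ (Fin d) → ℝ)
    (gradf : EuclideanSpace ℝ (Fin d) → EuclideanSpace ℝ (Fin d))
    (ν ρhat : ℝ) (wstar : EuclideanSpace ℝ (Fin d))
    (hQG : ∀ w, ν / 2 * ‖w - wstar‖ ^ 2 ≤ f w - f wstar)
    (hquasar : ∀ w, f w + (1 / ρhat) * ⟪gradf w, wstar - w⟫ ≤ f wstar)
    (θ : ℝ) (hθ0 : 0 < θ) (hθ1 : θ < 1) :
    ∀ w, f w + (1 / (ρhat * θ)) * ⟪gradf w, wstar - w⟫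
        + (ν * (1 - θ) / θ) / 2 * ‖wstar - w‖ ^ 2 ≤ f wstar := by
  intro w
  rw [norm_sub_rev]
  exact strong_quasar_ineq_of_quasar_of_growth hθ0 hθ1.le (hquasar w) (hQG w)

theorem strongly_quasar_of_quadratic_growth {d : ℕ}
    (f : EuclideanSpace ℝ (Fin d) → ℝ)
    (gradf : EuclideanSpace ℝ (Fin d) → EuclideanSpace ℝ (Fin d))
    (ν ρhat : ℝ) (wstar : EuclideanSpace ℝ (Fin d))
    (hν : 0 < ν) (hρhat : 0 < ρhat)
    (hgrad : ∀ w, HasGradientAt f (gradf w) w)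
    (hmin : ∀ w, f wstar ≤ f w)
    (hQG : ∀ w, ν / 2 * ‖w - wstar‖ ^ 2 ≤ f w - f wstar)
    (hquasar : ∀ w, f w + (1 / ρhat) * ⟪gradf w, wstar - w⟫ ≤ f wstar)
    (θ : ℝ) (hθ0 : 0 < θ) (hθ1 : θ < 1) :
    ∀ w, f w + (1 / (ρhat * θ)) * ⟪gradf w, wstar - w⟫
        + (ν * (1 - θ) / θ) / 2 * ‖wstar - w‖ ^ 2 ≤ f wstar :=
  strongly_quasar_of_quadratic_growth_general f gradf ν ρhat wstar hQG hquasar θ hθ0 hθ1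
end

section
/- Let σ : ℝ → ℝ be differentiable with σ'(z) ≥ α > 0 for all z, and let f(w) = (1/n) Σ_i (1/2)(σ(wᵀ x_i) − σ(w*ᵀ x_i))². Then ⟨∇f(w), w − w*⟩ ≥ α² · (1/n) Σ_i ((w − w*)ᵀ x_i)² for all w ∈ ℝ^d. -/
/-! Since `σ' ≥ α`, the mean value theorem gives `(σ a - σ b)(a - b) ≥ α (a - b)²`; multiplying
by `σ'(a) ≥ α > 0` bounds each summand of `⟪∇f(w), w - w*⟫` below by `α² ((w - w*)ᵀ xᵢ)²`. -/

open RealInnerProductSpace Finset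

/-- `deriv f` is `0` wherever `f` is not differentiable, so a positive lower bound on it forces
differentiability. -/
theorem differentiable_of_pos_le_deriv {f : ℝ → ℝ} {C : ℝ} (hC : 0 < C)
    (hf' : ∀ x, C ≤ deriv f x) : Differentiable ℝ f :=
  fun x => differentiableAt_of_deriv_ne_zero (hC.trans_le (hf' x)).ne'

theorem mul_sub_sq_le_image_sub_mul_sub_of_le_deriv {f : ℝ → ℝ} (hf : Differentiable ℝ f)
    {C : ℝ} (hf' : ∀ x, C ≤ deriv f x) (a b : ℝ) :
    C * (a - b) ^ 2 ≤ (f a - f b) * (a - b) := by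
  rcases le_total b a with hba | hab
  · have h := mul_sub_le_image_sub_of_le_deriv hf hf' hba
    nlinarith [sub_nonneg.2 hba]
  · have h := mul_sub_le_image_sub_of_le_deriv hf hf' hab
    nlinarith [sub_nonneg.2 hab]

theorem sq_mul_sub_sq_le_image_sub_mul_deriv_mul_sub {f : ℝ → ℝ} {C : ℝ} (hC : 0 < C)
    (hf' : ∀ x, C ≤ deriv f x) (a b : ℝ) :
    C ^ 2 * (a - b) ^ 2 ≤ (f a - f b) * deriv f a * (a - b) := by
  have hmono := mul_sub_sq_le_image_sub_mul_sub_of_le_deriv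
    (differentiable_of_pos_le_deriv hC hf') hf' a b
  have hnonneg : 0 ≤ (f a - f b) * (a - b) := le_trans (by positivity) hmono
  calc C ^ 2 * (a - b) ^ 2 = C * (C * (a - b) ^ 2) := by ring
    _ ≤ C * ((f a - f b) * (a - b)) := mul_le_mul_of_nonneg_left hmono hC.le
    _ ≤ deriv f a * ((f a - f b) * (a - b)) := mul_le_mul_of_nonneg_right (hf' a) hnonneg
    _ = (f a - f b) * deriv f a * (a - b) := by ring

theorem glm_empirical_generalized_var_coherent_general {d n : ℕ}
    (σ : ℝ → ℝ) (α : ℝ) (hα : 0 < α)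
    (hσ' : ∀ z, α ≤ deriv σ z)
    (x : Fin n → EuclideanSpace ℝ (Fin d))
    (wstar : EuclideanSpace ℝ (Fin d)) :
    ∀ w : EuclideanSpace ℝ (Fin d),
      α ^ 2 * ((1 / (n : ℝ)) * ∑ i, (⟪w - wstar, x i⟫ : ℝ) ^ 2) ≤
      ⟪(1 / (n : ℝ)) •
          ∑ i, ((σ ⟪w, x i⟫ - σ ⟪wstar, x i⟫) * deriv σ ⟪w, x i⟫) • x i,
        w - wstar⟫ := by
  intro w
  have hgap : ∀ i, ⟪x i, w - wstar⟫ = ⟪w, x i⟫ - ⟪wstar, x i⟫ := fun i => by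
    rw [inner_sub_right, real_inner_comm (x i), real_inner_comm (x i)]
  rw [real_inner_smul_left, sum_inner, mul_left_comm, mul_sum]
  gcongr with i
  rw [real_inner_smul_left, hgap, inner_sub_left]
  exact sq_mul_sub_sq_le_image_sub_mul_deriv_mul_sub hα hσ' _ _

theorem glm_empirical_generalized_var_coherent {d n : ℕ} (hn : 0 < n)
    (σ : ℝ → ℝ) (α : ℝ) (hα : 0 < α)
    (hσ : Differentiable ℝ σ)
    (hσ' : ∀ z, α ≤ deriv σ z)
    (x : Fin n → EuclideanSpace ℝ (Fin d))
    (wstar : EuclideanSpace ℝ (Fin d)) :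
    ∀ w : EuclideanSpace ℝ (Fin d),
      α ^ 2 * ((1 / (n : ℝ)) * ∑ i, (⟪w - wstar, x i⟫ : ℝ) ^ 2) ≤
      ⟪(1 / (n : ℝ)) •
          ∑ i, ((σ ⟪w, x i⟫ - σ ⟪wstar, x i⟫) * deriv σ ⟪w, x i⟫) • x i,
        w - wstar⟫ :=
  glm_empirical_generalized_var_coherent_general σ α hα hσ' x wstar
end

section
/- Let σ : ℝ → ℝ be L₀-Lipschitz and differentiable with σ'(z) ≥ α > 0 for all z. Then the empirical GLM loss f(w) = (1/n) Σ_i (1/2)(σ(wᵀ x_i) − σ(w*ᵀ x_i))² is ρ-quasar convex with ρ = 2α²/L₀² and global minimizer w*, i.e., f(w*) ≥ f(w) + (L₀²/(2α²))⟨∇f(w), w* − w⟩ for all w. -/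
/-!
Each sample contributes `½ Δ² + (L₀²/2α²) Δ σ'(a) (b - a)` to `f w + (L₀²/2α²)⟪∇f w, w* - w⟫`,
where `a = ⟪w, xᵢ⟫`, `b = ⟪w*, xᵢ⟫` and `Δ = σ a - σ b`. The lower bound on `σ'` makes `σ` strongly
monotone, `α (a - b)² ≤ Δ (a - b)`, so `σ'(a) Δ (a - b) ≥ α Δ (a - b) ≥ α² (a - b)² ≥ (α/L₀)² Δ²`
by the Lipschitz bound; hence every contribution is nonpositive, and `f w* = 0`.
-/

open RealInnerProductSpace Finset

section

variable {σ : ℝ → ℝ} {α : ℝ}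

theorem differentiable_of_pos_le_deriv_s7 (hα : 0 < α) (hσ' : ∀ z, α ≤ deriv σ z) :
    Differentiable ℝ σ :=
  fun z => differentiableAt_of_deriv_ne_zero (by linarith [hσ' z])

theorem mul_sq_sub_le_of_le_deriv (hσ : Differentiable ℝ σ) (hσ' : ∀ z, α ≤ deriv σ z)
    (a b : ℝ) : α * (a - b) ^ 2 ≤ (σ a - σ b) * (a - b) := by
  rcases le_total b a with hba | hab
  · have := mul_sub_le_image_sub_of_le_deriv hσ hσ' hba
    nlinarith [sub_nonneg.2 hba]
  · have := mul_sub_le_image_sub_of_le_deriv hσ hσ' hab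
    nlinarith [sub_nonneg.2 hab]

theorem glm_sample_quasar_convex {L0 : ℝ} (hα : 0 < α)
    (hLip : ∀ a b : ℝ, |σ a - σ b| ≤ L0 * |a - b|) (hσ' : ∀ z, α ≤ deriv σ z) (a b : ℝ) :
    (1 / 2) * (σ a - σ b) ^ 2 +
      (L0 ^ 2 / (2 * α ^ 2)) * ((σ a - σ b) * deriv σ a * (b - a)) ≤ 0 := by
  have hmono := mul_sq_sub_le_of_le_deriv (differentiable_of_pos_le_deriv_s7 hα hσ') hσ' a b
  have hsq : (σ a - σ b) ^ 2 ≤ L0 ^ 2 * (a - b) ^ 2 := by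
    rw [← sq_abs, ← sq_abs (a - b), ← mul_pow]
    exact pow_le_pow_left₀ (abs_nonneg _) (hLip a b) 2
  have hcorr : 0 ≤ (σ a - σ b) * (a - b) := le_trans (by positivity) hmono
  have key : α ^ 2 * (σ a - σ b) ^ 2 ≤ L0 ^ 2 * (deriv σ a * ((σ a - σ b) * (a - b))) :=
    calc α ^ 2 * (σ a - σ b) ^ 2
        ≤ α ^ 2 * (L0 ^ 2 * (a - b) ^ 2) := by gcongr
      _ = L0 ^ 2 * (α * (α * (a - b) ^ 2)) := by ring
      _ ≤ L0 ^ 2 * (α * ((σ a - σ b) * (a - b))) := by gcongr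
      _ ≤ L0 ^ 2 * (deriv σ a * ((σ a - σ b) * (a - b))) := by gcongr; exact hσ' a
  have hrewrite : (1 / 2) * (σ a - σ b) ^ 2 +
      (L0 ^ 2 / (2 * α ^ 2)) * ((σ a - σ b) * deriv σ a * (b - a)) =
      (α ^ 2 * (σ a - σ b) ^ 2 - L0 ^ 2 * (deriv σ a * ((σ a - σ b) * (a - b)))) /
        (2 * α ^ 2) := by
    field_simp
    ring
  rw [hrewrite]
  exact div_nonpos_of_nonpos_of_nonneg (by linarith) (by positivity)

end

theorem glm_empirical_quasar_convex_general {d n : ℕ}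
    (σ : ℝ → ℝ) (L0 α : ℝ) (hα : 0 < α)
    (hLip : ∀ a b : ℝ, |σ a - σ b| ≤ L0 * |a - b|)
    (hσ' : ∀ z, α ≤ deriv σ z)
    (x : Fin n → EuclideanSpace ℝ (Fin d))
    (wstar : EuclideanSpace ℝ (Fin d))
    (f : EuclideanSpace ℝ (Fin d) → ℝ)
    (hf : ∀ w, f w = (1 / (n : ℝ)) *
      ∑ i, (1 / 2) * (σ ⟪w, x i⟫ - σ ⟪wstar, x i⟫) ^ 2)
    (gradf : EuclideanSpace ℝ (Fin d) → EuclideanSpace ℝ (Fin d))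
    (hgradf : ∀ w, gradf w = (1 / (n : ℝ)) •
      ∑ i, ((σ ⟪w, x i⟫ - σ ⟪wstar, x i⟫) * deriv σ ⟪w, x i⟫) • x i) :
    ∀ w, f w + (L0 ^ 2 / (2 * α ^ 2)) * ⟪gradf w, wstar - w⟫ ≤ f wstar := by
  intro w
  have hfstar : f wstar = 0 := by simp [hf]
  have hinner : ⟪gradf w, wstar - w⟫ = (1 / (n : ℝ)) *
      ∑ i, (σ ⟪w, x i⟫ - σ ⟪wstar, x i⟫) * deriv σ ⟪w, x i⟫ * (⟪wstar, x i⟫ - ⟪w, x i⟫) := by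
    rw [hgradf, real_inner_smul_left, sum_inner]
    simp only [real_inner_comm (wstar - w), inner_sub_left, real_inner_smul_right, mul_sub]
  calc f w + (L0 ^ 2 / (2 * α ^ 2)) * ⟪gradf w, wstar - w⟫
      = (1 / (n : ℝ)) * ∑ i, ((1 / 2) * (σ ⟪w, x i⟫ - σ ⟪wstar, x i⟫) ^ 2 +
          (L0 ^ 2 / (2 * α ^ 2)) * ((σ ⟪w, x i⟫ - σ ⟪wstar, x i⟫) * deriv σ ⟪w, x i⟫ *
            (⟪wstar, x i⟫ - ⟪w, x i⟫))) := by
        rw [hf, hinner, sum_add_distrib, ← mul_sum _ _ (L0 ^ 2 / (2 * α ^ 2))]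
        ring
    _ ≤ 0 := mul_nonpos_of_nonneg_of_nonpos (by positivity)
        (sum_nonpos fun i _ => glm_sample_quasar_convex hα hLip hσ' _ _)
    _ = f wstar := hfstar.symm

theorem glm_empirical_quasar_convex {d n : ℕ} (hn : 0 < n)
    (σ : ℝ → ℝ) (L0 α : ℝ) (hα : 0 < α) (hL0 : 0 < L0)
    (hLip : ∀ a b : ℝ, |σ a - σ b| ≤ L0 * |a - b|)
    (hσ : Differentiable ℝ σ)
    (hσ' : ∀ z, α ≤ deriv σ z)
    (x : Fin n → EuclideanSpace ℝ (Fin d))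
    (wstar : EuclideanSpace ℝ (Fin d))
    (f : EuclideanSpace ℝ (Fin d) → ℝ)
    (hf : ∀ w, f w = (1 / (n : ℝ)) *
      ∑ i, (1 / 2) * (σ ⟪w, x i⟫ - σ ⟪wstar, x i⟫) ^ 2)
    (gradf : EuclideanSpace ℝ (Fin d) → EuclideanSpace ℝ (Fin d))
    (hgradf : ∀ w, gradf w = (1 / (n : ℝ)) •
      ∑ i, ((σ ⟪w, x i⟫ - σ ⟪wstar, x i⟫) * deriv σ ⟪w, x i⟫) • x i) :
    ∀ w, f w + (L0 ^ 2 / (2 * α ^ 2)) * ⟪gradf w, wstar - w⟫ ≤ f wstar :=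
  glm_empirical_quasar_convex_general σ L0 α hα hLip hσ' x wstar f hf gradf hgradf
end

section
/- Let σ : ℝ → ℝ be differentiable with σ'(z) ≥ α > 0 for all z, and suppose the matrix M = (1/n) Σ_i x_i x_iᵀ has smallest eigenvalue λ_min(M) > 0. Then the empirical loss f(w) = (1/n) Σ_i (1/2)(σ(wᵀ x_i) − σ(w*ᵀ x_i))² satisfies f(w) − f(w*) ≥ (α² λ_min(M)/2)‖w − w*‖² for all w, i.e., f satisfies α²λ_min(M)-quadratic growth. -/
/-!
By the mean value theorem, `σ' ≥ α ≥ 0` gives `|σ a - σ b| ≥ α |a - b|`, so the `i`-th summand of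
`f w` dominates `(α² / 2) ⟪x i, w - w*⟫²`. Averaging over `i` produces the quadratic form of `M`
at `w - w*`, which is at least `λ_min(M) ‖w - w*‖²`, while `f w* = 0`.
-/

open RealInnerProductSpace Finset

theorem mul_abs_sub_le_abs_image_sub_of_le_deriv {σ : ℝ → ℝ} {α : ℝ}
    (hσ : Differentiable ℝ σ) (hσ' : ∀ z, α ≤ deriv σ z) (a b : ℝ) :
    α * |a - b| ≤ |σ a - σ b| := by
  wlog hba : b ≤ a generalizing a b
  · rw [abs_sub_comm a, abs_sub_comm (σ a)]
    exact this b a (le_of_not_ge hba)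
  calc α * |a - b| = α * (a - b) := by rw [abs_of_nonneg (sub_nonneg.2 hba)]
    _ ≤ σ a - σ b := mul_sub_le_image_sub_of_le_deriv hσ hσ' hba
    _ ≤ |σ a - σ b| := le_abs_self _

theorem sq_mul_sq_sub_le_sq_image_sub_of_le_deriv {σ : ℝ → ℝ} {α : ℝ} (hα : 0 ≤ α)
    (hσ : Differentiable ℝ σ) (hσ' : ∀ z, α ≤ deriv σ z) (a b : ℝ) :
    α ^ 2 * (a - b) ^ 2 ≤ (σ a - σ b) ^ 2 := by
  rw [← sq_abs (a - b), ← sq_abs (σ a - σ b), ← mul_pow]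
  exact pow_le_pow_left₀ (by positivity) (mul_abs_sub_le_abs_image_sub_of_le_deriv hσ hσ' a b) 2

theorem glm_empirical_quadratic_growth_general {d n : ℕ}
    (σ : ℝ → ℝ) (α : ℝ) (hα : 0 < α)
    (hσ : Differentiable ℝ σ)
    (hσ' : ∀ z, α ≤ deriv σ z)
    (x : Fin n → EuclideanSpace ℝ (Fin d))
    (wstar : EuclideanSpace ℝ (Fin d))
    (lam : ℝ)
    (hmin : ∀ v : EuclideanSpace ℝ (Fin d),
      lam * ‖v‖ ^ 2 ≤ (1 / (n : ℝ)) * ∑ i, (⟪x i, v⟫ : ℝ) ^ 2)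
    (f : EuclideanSpace ℝ (Fin d) → ℝ)
    (hf : ∀ w, f w = (1 / (n : ℝ)) *
      ∑ i, (1 / 2) * (σ ⟪w, x i⟫ - σ ⟪wstar, x i⟫) ^ 2) :
    ∀ w, α ^ 2 * lam / 2 * ‖w - wstar‖ ^ 2 ≤ f w - f wstar := by
  intro w
  have hf_wstar : f wstar = 0 := by simp [hf]
  have hterm : ∀ i, α ^ 2 * ⟪x i, w - wstar⟫ ^ 2 ≤ (σ ⟪w, x i⟫ - σ ⟪wstar, x i⟫) ^ 2 := by
    intro i
    simpa only [inner_sub_right, real_inner_comm (x i)] using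
      sq_mul_sq_sub_le_sq_image_sub_of_le_deriv hα.le hσ hσ' ⟪w, x i⟫ ⟪wstar, x i⟫
  calc α ^ 2 * lam / 2 * ‖w - wstar‖ ^ 2 = α ^ 2 / 2 * (lam * ‖w - wstar‖ ^ 2) := by ring
    _ ≤ α ^ 2 / 2 * ((1 / (n : ℝ)) * ∑ i, ⟪x i, w - wstar⟫ ^ 2) :=
      mul_le_mul_of_nonneg_left (hmin _) (by positivity)
    _ = (1 / (n : ℝ)) * ∑ i, (1 / 2) * (α ^ 2 * ⟪x i, w - wstar⟫ ^ 2) := by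
      rw [mul_left_comm, Finset.mul_sum]
      exact congrArg _ (sum_congr rfl fun i _ => by ring)
    _ ≤ (1 / (n : ℝ)) * ∑ i, (1 / 2) * (σ ⟪w, x i⟫ - σ ⟪wstar, x i⟫) ^ 2 := by
      gcongr with i; exact hterm i
    _ = f w - f wstar := by rw [hf_wstar, sub_zero, hf]

theorem glm_empirical_quadratic_growth {d n : ℕ} (hn : 0 < n)
    (σ : ℝ → ℝ) (α : ℝ) (hα : 0 < α)
    (hσ : Differentiable ℝ σ)
    (hσ' : ∀ z, α ≤ deriv σ z)
    (x : Fin n → EuclideanSpace ℝ (Fin d))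
    (wstar : EuclideanSpace ℝ (Fin d))
    (lam : ℝ) (hlam : 0 < lam)
    (hmin : ∀ v : EuclideanSpace ℝ (Fin d),
      lam * ‖v‖ ^ 2 ≤ (1 / (n : ℝ)) * ∑ i, (⟪x i, v⟫ : ℝ) ^ 2)
    (f : EuclideanSpace ℝ (Fin d) → ℝ)
    (hf : ∀ w, f w = (1 / (n : ℝ)) *
      ∑ i, (1 / 2) * (σ ⟪w, x i⟫ - σ ⟪wstar, x i⟫) ^ 2) :
    ∀ w, α ^ 2 * lam / 2 * ‖w - wstar‖ ^ 2 ≤ f w - f wstar :=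
  glm_empirical_quadratic_growth_general σ α hα hσ hσ' x wstar lam hmin f hf
end
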